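/- If n/(2k) → 1/ρ with ρ > 0 as n, k → ∞, then limsup (1/n)·log(Σ_{|κ|=2k, ℓ(κ)≤m} dim F_n^κ) ≤ m·((1+ρ)log(1+ρ) − ρ log ρ). -/

import Mathlib

open scoped Classical
open Filter

/-- Extension of a partition with at most `m` parts to `n` parts by appending zeros. -/
def extPart (m n : ℕ) (κ : Fin m → ℕ) (i : Fin n) : ℕ :=
  if h : (i : ℕ) < m then κ ⟨i, h⟩ else 0

/-- Weyl dimension formula for `GL(n,ℝ)`:
`dim F_n^κ = Π_{1 ≤ i < j ≤ n} (κ_i − κ_j + j − i)/(j − i)`, with `κ` extended by zeros. -/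
noncomputable def dimF (m n : ℕ) (κ : Fin m → ℕ) : ℝ :=
  ∏ i : Fin n, ∏ j : Fin n,
    if (i : ℕ) < (j : ℕ) then
      (((extPart m n κ i : ℝ) - (extPart m n κ j : ℝ) + ((j : ℕ) : ℝ) - ((i : ℕ) : ℝ)) /
        (((j : ℕ) : ℝ) - ((i : ℕ) : ℝ)))
    else 1

/-- The set of partitions `κ_1 ≥ ... ≥ κ_m ≥ 0` of degree `2k` with at most `m` parts. -/
noncomputable def partitionSet (m k : ℕ) : Finset (Fin m → ℕ) :=
  (Fintype.piFinset fun _ : Fin m => Finset.range (2 * k + 1)).filter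
    fun κ => (∀ i j : Fin m, i ≤ j → κ j ≤ κ i) ∧ ∑ i, κ i = 2 * k

/-!
Every Weyl factor `(κ_i - κ_j + j - i)/(j - i)` of `dim F_n^κ` lies between `1` and
`(2k + j - i)/(j - i)`, and equals `1` for rows `i ≥ m`. Hence each of the `m` nontrivial rows
is at most `∏_{d < n} (2k + d + 1)/(d + 1) = C(2k + n, 2k)`, and `dim F_n^κ ≤ C(2k + n, 2k)^m`.
With at most `(2k + 1)^m` partitions and the binomial-term bound `C(N, K) ρ^K ≤ (1 + ρ)^N`,
`(1/n) log Σ dim F_n^κ ≤ m log(2k + 1)/n + m((2k/n + 1) log(1 + ρ) - (2k/n) log ρ)`,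
whose right side tends to `m((1 + ρ) log(1 + ρ) - ρ log ρ)` as `2k/n → ρ`.
-/

open Finset

theorem choose_mul_pow_le_one_add_pow {x : ℝ} (hx : 0 ≤ x) (n k : ℕ) :
    (n.choose k : ℝ) * x ^ k ≤ (1 + x) ^ n := by
  rcases le_or_gt k n with hkn | hnk
  · rw [add_comm, add_pow]
    calc (n.choose k : ℝ) * x ^ k = x ^ k * 1 ^ (n - k) * n.choose k := by ring
      _ ≤ _ := single_le_sum (f := fun i => x ^ i * 1 ^ (n - i) * (n.choose i : ℝ))
          (fun i _ => by positivity) (mem_range.2 (Nat.lt_succ_of_le hkn))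
  · rw [Nat.choose_eq_zero_of_lt hnk, Nat.cast_zero, zero_mul]
    positivity

theorem prod_range_add_div_eq_choose (K N : ℕ) :
    ∏ d ∈ range N, ((K : ℝ) + (d + 1)) / (d + 1) = (K + N).choose K := by
  induction N with
  | zero => simp
  | succ N ih =>
    have key : ((K + N + 1 : ℕ) : ℝ) * (K + N).choose K = (K + (N + 1)).choose K * (N + 1) := by
      rw [Nat.choose_symm_add, Nat.choose_symm_add]
      exact_mod_cast Nat.add_one_mul_choose_eq (K + N) N
    rw [prod_range_succ, ih, ← mul_div_assoc, div_eq_iff (by positivity), ← key]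
    push_cast
    ring

section Weyl

variable {m : ℕ} {κ : Fin m → ℕ}

def partExt (m : ℕ) (κ : Fin m → ℕ) (t : ℕ) : ℕ :=
  if h : t < m then κ ⟨t, h⟩ else 0

noncomputable def weylFactor (m : ℕ) (κ : Fin m → ℕ) (a b : ℕ) : ℝ :=
  if a < b then ((partExt m κ a : ℝ) - partExt m κ b + b - a) / ((b : ℝ) - a) else 1

theorem dimF_eq_prod_range (m n : ℕ) (κ : Fin m → ℕ) :
    dimF m n κ = ∏ i ∈ range n, ∏ j ∈ range n, weylFactor m κ i j := by
  rw [← Fin.prod_univ_eq_prod_range]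
  refine prod_congr rfl fun i _ => ?_
  rw [← Fin.prod_univ_eq_prod_range]
  rfl

theorem partExt_antitone (hκ : Antitone κ) : Antitone (partExt m κ) := by
  intro s t hst
  unfold partExt
  by_cases ht : t < m
  · rw [dif_pos ht, dif_pos (hst.trans_lt ht)]
    exact hκ (Fin.mk_le_mk.2 hst)
  · rw [dif_neg ht]
    exact Nat.zero_le _

theorem partExt_le {K : ℕ} (hK : ∀ i, κ i ≤ K) (t : ℕ) : partExt m κ t ≤ K := by
  unfold partExt
  split
  · exact hK _
  · exact Nat.zero_le _

theorem partExt_of_le {t : ℕ} (ht : m ≤ t) : partExt m κ t = 0 :=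
  dif_neg (Nat.not_lt.2 ht)

theorem one_le_weylFactor (hκ : Antitone κ) (a b : ℕ) : 1 ≤ weylFactor m κ a b := by
  unfold weylFactor
  split
  · rename_i hab
    have hba : (0 : ℝ) < b - a := sub_pos.2 (Nat.cast_lt.2 hab)
    have : (partExt m κ b : ℝ) ≤ partExt m κ a := by exact_mod_cast partExt_antitone hκ hab.le
    rw [one_le_div hba]
    linarith
  · exact le_rfl

theorem weylFactor_of_le {a : ℕ} (ha : m ≤ a) (b : ℕ) : weylFactor m κ a b = 1 := by
  unfold weylFactor
  split
  · rename_i hab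
    have hba : (b : ℝ) - a ≠ 0 := (sub_pos.2 (Nat.cast_lt.2 hab)).ne'
    rw [partExt_of_le ha, partExt_of_le (ha.trans hab.le)]
    simpa using div_self hba
  · rfl

theorem weylFactor_le {K : ℕ} (hK : ∀ i, κ i ≤ K) {a b : ℕ} (hab : a < b) :
    weylFactor m κ a b ≤ ((K : ℝ) + (b - a)) / (b - a) := by
  have hba : (0 : ℝ) < b - a := sub_pos.2 (Nat.cast_lt.2 hab)
  rw [weylFactor, if_pos hab]
  gcongr
  have : (partExt m κ a : ℝ) ≤ K := by exact_mod_cast partExt_le hK a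
  have : (0 : ℝ) ≤ partExt m κ b := Nat.cast_nonneg _
  linarith

theorem prod_weylFactor_le_choose (hκ : Antitone κ) {K : ℕ} (hK : ∀ i, κ i ≤ K) (a n : ℕ) :
    ∏ j ∈ range n, weylFactor m κ a j ≤ (K + n).choose K := by
  have hw : ∀ j, 0 ≤ weylFactor m κ a j :=
    fun j => zero_le_one.trans (one_le_weylFactor hκ a j)
  have head : ∏ j ∈ range (a + 1), weylFactor m κ a j = 1 :=
    prod_eq_one fun j hj => by rw [weylFactor, if_neg (by grind)]
  calc ∏ j ∈ range n, weylFactor m κ a j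
      ≤ ∏ j ∈ range (a + 1 + n), weylFactor m κ a j :=
        prod_le_prod_of_subset_of_one_le (range_mono (by omega)) (fun j _ => hw j)
          fun j _ _ => one_le_weylFactor hκ a j
    _ = ∏ d ∈ range n, weylFactor m κ a (a + 1 + d) := by rw [prod_range_add, head, one_mul]
    _ ≤ ∏ d ∈ range n, ((K : ℝ) + (d + 1)) / (d + 1) := by
        refine prod_le_prod (fun d _ => hw _) fun d _ => ?_
        refine (weylFactor_le hK (by omega : a < a + 1 + d)).trans_eq ?_
        push_cast
        ring
    _ = (K + n).choose K := prod_range_add_div_eq_choose K n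

theorem one_le_dimF (hκ : Antitone κ) (n : ℕ) : 1 ≤ dimF m n κ := by
  rw [dimF_eq_prod_range]
  exact one_le_prod fun i _ => one_le_prod fun j _ => one_le_weylFactor hκ i j

theorem dimF_le_choose_pow (hκ : Antitone κ) {K : ℕ} (hK : ∀ i, κ i ≤ K) (n : ℕ) :
    dimF m n κ ≤ ((K + n).choose K : ℝ) ^ m := by
  set row := fun i => ∏ j ∈ range n, weylFactor m κ i j
  have one_le_row : ∀ i, 1 ≤ row i := fun i => one_le_prod fun j _ => one_le_weylFactor hκ i j
  have tail : ∏ i ∈ range n, row (m + i) = 1 :=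
    prod_eq_one fun i _ => prod_eq_one fun j _ => weylFactor_of_le (Nat.le_add_right m i) j
  rw [dimF_eq_prod_range]
  calc ∏ i ∈ range n, row i
      ≤ ∏ i ∈ range (m + n), row i :=
        prod_le_prod_of_subset_of_one_le (range_mono (by omega))
          (fun i _ => zero_le_one.trans (one_le_row i)) fun i _ _ => one_le_row i
    _ = ∏ i ∈ range m, row i := by rw [prod_range_add, tail, mul_one]
    _ ≤ ∏ i ∈ range m, ((K + n).choose K : ℝ) :=
        prod_le_prod (fun i _ => zero_le_one.trans (one_le_row i))
          fun i _ => prod_weylFactor_le_choose hκ hK i n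
    _ = ((K + n).choose K : ℝ) ^ m := by rw [prod_const, card_range]

end Weyl

theorem Real.log_choose_le {x : ℝ} (hx : 0 < x) {n k : ℕ} (hkn : k ≤ n) :
    Real.log (n.choose k) ≤ n * Real.log (1 + x) - k * Real.log x := by
  have hbound : (n.choose k : ℝ) ≤ (1 + x) ^ n / x ^ k := by
    rw [le_div_iff₀ (by positivity)]
    exact choose_mul_pow_le_one_add_pow hx.le n k
  calc Real.log (n.choose k) ≤ Real.log ((1 + x) ^ n / x ^ k) :=
        Real.log_le_log (by exact_mod_cast Nat.choose_pos hkn) hbound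
    _ = n * Real.log (1 + x) - k * Real.log x := by
        rw [Real.log_div (by positivity) (by positivity), Real.log_pow, Real.log_pow]

theorem Filter.Tendsto.log_div_of_tendsto_div {ι : Type*} {l : Filter ι} {x y : ι → ℝ} {c : ℝ}
    (hc : c ≠ 0) (hy : Tendsto y l atTop) (hxy : Tendsto (fun i => x i / y i) l (nhds c)) :
    Tendsto (fun i => Real.log (x i) / y i) l (nhds 0) := by
  have hlog_y : Tendsto (fun i => Real.log (y i) / y i) l (nhds 0) :=
    Real.isLittleO_log_id_atTop.tendsto_div_nhds_zero.comp hy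
  have hlog_xy : Tendsto (fun i => Real.log (x i / y i) * (y i)⁻¹) l (nhds 0) := by
    simpa using (hxy.log hc).mul (tendsto_inv_atTop_zero.comp hy)
  rw [← add_zero (0 : ℝ)]
  refine (hlog_xy.add hlog_y).congr' ?_
  filter_upwards [hy.eventually_gt_atTop 0, hxy.eventually_ne hc] with i hy_pos hxy_ne
  have hx : x i ≠ 0 := by rintro h; simp [h] at hxy_ne
  rw [Real.log_div hx hy_pos.ne']
  field_simp
  ring

theorem antitone_of_mem_partitionSet {m k : ℕ} {κ : Fin m → ℕ} (hκ : κ ∈ partitionSet m k) :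
    Antitone κ :=
  fun i j hij => (mem_filter.1 hκ).2.1 i j hij

theorem le_of_mem_partitionSet {m k : ℕ} {κ : Fin m → ℕ} (hκ : κ ∈ partitionSet m k) (i : Fin m) :
    κ i ≤ 2 * k :=
  Nat.lt_succ_iff.1 (mem_range.1 (Fintype.mem_piFinset.1 (mem_filter.1 hκ).1 i))

theorem card_partitionSet_le (m k : ℕ) : #(partitionSet m k) ≤ (2 * k + 1) ^ m :=
  (card_filter_le _ _).trans (by simp)

theorem sum_dimF_le (m n k : ℕ) :
    ∑ κ ∈ partitionSet m k, dimF m n κ ≤ ((2 * k + 1 : ℝ) * (2 * k + n).choose (2 * k)) ^ m := by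
  calc ∑ κ ∈ partitionSet m k, dimF m n κ
      ≤ #(partitionSet m k) • (((2 * k + n).choose (2 * k) : ℝ) ^ m) :=
        sum_le_card_nsmul _ _ _ fun κ hκ =>
          dimF_le_choose_pow (antitone_of_mem_partitionSet hκ) (le_of_mem_partitionSet hκ) n
    _ ≤ (2 * k + 1 : ℝ) ^ m * ((2 * k + n).choose (2 * k) : ℝ) ^ m := by
        rw [nsmul_eq_mul]
        gcongr
        exact_mod_cast card_partitionSet_le m k
    _ = _ := (mul_pow _ _ _).symm

theorem log_sum_dimF_nonneg (m n k : ℕ) : 0 ≤ Real.log (∑ κ ∈ partitionSet m k, dimF m n κ) := by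
  rcases (partitionSet m k).eq_empty_or_nonempty with h | ⟨κ, hκ⟩
  · rw [h, sum_empty, Real.log_zero]
  · refine Real.log_nonneg ((one_le_dimF (antitone_of_mem_partitionSet hκ) n).trans ?_)
    exact single_le_sum (fun κ hκ => zero_le_one.trans
      (one_le_dimF (antitone_of_mem_partitionSet hκ) n)) hκ

theorem log_sum_dimF_le (m : ℕ) {ρ : ℝ} (hρ : 0 < ρ) (n k : ℕ) :
    Real.log (∑ κ ∈ partitionSet m k, dimF m n κ) ≤
      m * Real.log (2 * k + 1) + m * ((2 * k + n) * Real.log (1 + ρ) - 2 * k * Real.log ρ) := by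
  set C := (2 * k + n).choose (2 * k)
  have hC : 1 ≤ (C : ℝ) := Nat.one_le_cast.2 (Nat.choose_pos (Nat.le_add_right _ _))
  have hlogC : Real.log C ≤ (2 * k + n) * Real.log (1 + ρ) - 2 * k * Real.log ρ := by
    exact_mod_cast Real.log_choose_le hρ (Nat.le_add_right (2 * k) n)
  have hS : 0 ≤ ∑ κ ∈ partitionSet m k, dimF m n κ := sum_nonneg fun κ hκ =>
    zero_le_one.trans (one_le_dimF (antitone_of_mem_partitionSet hκ) n)
  calc Real.log (∑ κ ∈ partitionSet m k, dimF m n κ)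
      ≤ Real.log (((2 * k + 1 : ℝ) * C) ^ m) := by
        rcases hS.eq_or_lt with h0 | hpos
        · rw [← h0, Real.log_zero]
          exact Real.log_nonneg (one_le_pow₀ (one_le_mul_of_one_le_of_one_le (by linarith) hC))
        · exact Real.log_le_log hpos (sum_dimF_le m n k)
    _ = m * Real.log (2 * k + 1) + m * Real.log C := by
        rw [Real.log_pow, Real.log_mul (by positivity) (by positivity), mul_add]
    _ ≤ _ := by gcongr

theorem log_sum_dimF_div_le (m : ℕ) {ρ : ℝ} (hρ : 0 < ρ) {n : ℕ} (hn : n ≠ 0) (k : ℕ) :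
    1 / (n : ℝ) * Real.log (∑ κ ∈ partitionSet m k, dimF m n κ) ≤
      m * (Real.log (2 * k + 1) / n) +
        m * ((2 * k / n + 1) * Real.log (1 + ρ) - 2 * k / n * Real.log ρ) := by
  have hn' : (0 : ℝ) < n := Nat.cast_pos.2 (Nat.pos_of_ne_zero hn)
  calc 1 / (n : ℝ) * Real.log (∑ κ ∈ partitionSet m k, dimF m n κ)
      ≤ 1 / (n : ℝ) * (m * Real.log (2 * k + 1) +
          m * ((2 * k + n) * Real.log (1 + ρ) - 2 * k * Real.log ρ)) := by
        gcongr
        exact log_sum_dimF_le m hρ n k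
    _ = _ := by field_simp

theorem stmt18_general (m : ℕ) (ρ : ℝ) (hρ : 0 < ρ)
    (n k : ℕ → ℕ) (hn : Tendsto n atTop atTop)
    (hratio : Tendsto (fun j => (n j : ℝ) / (2 * (k j : ℝ))) atTop (nhds (1 / ρ))) :
    Filter.limsup (fun j => (1 / (n j : ℝ)) *
        Real.log (∑ κ ∈ partitionSet m (k j), dimF m (n j) κ)) atTop ≤
      m * ((1 + ρ) * Real.log (1 + ρ) - ρ * Real.log ρ) := by
  have hN : Tendsto (fun j => (n j : ℝ)) atTop atTop := tendsto_natCast_atTop_atTop.comp hn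
  have hr : Tendsto (fun j => 2 * (k j : ℝ) / n j) atTop (nhds ρ) := by
    simpa only [one_div, inv_inv, inv_div] using hratio.inv₀ (by positivity)
  have hlog : Tendsto (fun j => Real.log (2 * k j + 1) / n j) atTop (nhds 0) := by
    refine Tendsto.log_div_of_tendsto_div hρ.ne' hN ?_
    simpa only [add_div, add_zero, one_div, Function.comp_def] using
      hr.add (tendsto_inv_atTop_zero.comp hN)
  have hlim := (hlog.const_mul (m : ℝ)).add <|
    (((hr.add_const 1).mul_const (Real.log (1 + ρ))).sub (hr.mul_const (Real.log ρ))).const_mul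
      (m : ℝ)
  rw [mul_zero, zero_add, add_comm ρ 1] at hlim
  refine (limsup_le_limsup ?_ ?_ hlim.isBoundedUnder_le).trans_eq hlim.limsup_eq
  · filter_upwards [hn.eventually_ne_atTop 0] with j hj using log_sum_dimF_div_le m hρ hj (k j)
  · exact isCoboundedUnder_le_of_le atTop fun j =>
      mul_nonneg (by positivity) (log_sum_dimF_nonneg m (n j) (k j))

/-- if `n/(2k) → 1/ρ` with `ρ > 0` as `n, k → ∞`, then
`limsup (1/n)·log(Σ_{|κ|=2k, ℓ(κ)≤m} dim F_n^κ) ≤ m((1+ρ)log(1+ρ) − ρ log ρ)`. -/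
theorem stmt18 (m : ℕ) (hm : 1 ≤ m) (ρ : ℝ) (hρ : 0 < ρ)
    (n k : ℕ → ℕ) (hn : Tendsto n atTop atTop) (hk : Tendsto k atTop atTop)
    (hmn : ∀ j, m ≤ n j)
    (hratio : Tendsto (fun j => (n j : ℝ) / (2 * (k j : ℝ))) atTop (nhds (1 / ρ))) :
    Filter.limsup (fun j => (1 / (n j : ℝ)) *
        Real.log (∑ κ ∈ partitionSet m (k j), dimF m (n j) κ)) atTop ≤
      m * ((1 + ρ) * Real.log (1 + ρ) - ρ * Real.log ρ) :=
  stmt18_general m ρ hρ n k hn hratio
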